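/- arXiv:2311.17728 — 9 statements merged into one kernel-verified Lean document; each statement's English description precedes it below -/
import Mathlib

section
/- If (A(t))_{t≥1} is a sequence of α-safe column-stochastic n×n matrices with positive diagonal entries whose associated dynamic graph has finite dynamic diameter D, and v ∈ ℝ^n is nonnegative, then for all i and all t ≥ D, α^D · (∑_k v_k) ≤ (A(t)···A(1)v)_i ≤ ∑_k v_k. -/
/-- `windowProd A t k = A(t+k-1) * ⋯ * A(t+1) * A(t)` (backward product of `k`
consecutive matrices starting at index `t`). -/
def windowProd {n : ℕ} (A : ℕ → Matrix (Fin n) (Fin n) ℝ) (t : ℕ) :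
    ℕ → Matrix (Fin n) (Fin n) ℝ
  | 0 => 1
  | k + 1 => A (t + k) * windowProd A t k

lemma windowProd_add {n : ℕ} (A : ℕ → Matrix (Fin n) (Fin n) ℝ) (t a b : ℕ) :
    windowProd A t (a + b) = windowProd A (t + a) b * windowProd A t a := by
  induction b with
  | zero => simp [windowProd]
  | succ b ih =>
      show windowProd A t (a + b + 1) = _
      rw [windowProd, ih]
      show _ = A (t + a + b) * windowProd A (t + a) b * windowProd A t a
      rw [mul_assoc, add_assoc]

lemma windowProd_nonneg {n : ℕ} {A : ℕ → Matrix (Fin n) (Fin n) ℝ}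
    (hnn : ∀ t, 1 ≤ t → ∀ i j, 0 ≤ A t i j) {t : ℕ} (ht : 1 ≤ t) (k : ℕ) :
    ∀ i j, 0 ≤ windowProd A t k i j := by
  induction k with
  | zero =>
      intro i j
      simp only [windowProd, Matrix.one_apply]
      split <;> norm_num
  | succ k ih =>
      intro i j
      rw [windowProd, Matrix.mul_apply]
      exact Finset.sum_nonneg fun m _ =>
        mul_nonneg (hnn (t + k) (le_add_right ht) i m) (ih m j)

lemma windowProd_colsum {n : ℕ} {A : ℕ → Matrix (Fin n) (Fin n) ℝ}
    (hcol : ∀ t, 1 ≤ t → ∀ j, ∑ i, A t i j = 1) {t : ℕ} (ht : 1 ≤ t) (k : ℕ) :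
    ∀ j, ∑ i, windowProd A t k i j = 1 := by
  induction k with
  | zero =>
      intro j
      simp [windowProd, Matrix.one_apply]
  | succ k ih =>
      intro j
      simp only [windowProd, Matrix.mul_apply]
      rw [Finset.sum_comm]
      have : ∀ m ∈ Finset.univ, ∑ i, A (t + k) i m * windowProd A t k m j
          = windowProd A t k m j := by
        intro m _
        rw [← Finset.sum_mul, hcol (t + k) (le_add_right ht) m, one_mul]
      rw [Finset.sum_congr rfl this, ih j]

lemma windowProd_safe {n : ℕ} {α : ℝ} {A : ℕ → Matrix (Fin n) (Fin n) ℝ}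
    (hnn : ∀ t, 1 ≤ t → ∀ i j, 0 ≤ A t i j)
    (hsafe : ∀ t, 1 ≤ t → ∀ i j, A t i j ≠ 0 → α ≤ A t i j)
    (hα : 0 < α) {t : ℕ} (ht : 1 ≤ t) (k : ℕ) :
    ∀ i j, windowProd A t k i j ≠ 0 → α ^ k ≤ windowProd A t k i j := by
  induction k with
  | zero =>
      intro i j h
      simp only [windowProd, Matrix.one_apply] at h ⊢
      split
      · simp
      · simp_all
  | succ k ih =>
      intro i j h
      rw [windowProd, Matrix.mul_apply] at h ⊢
      obtain ⟨m, -, hm⟩ := Finset.exists_ne_zero_of_sum_ne_zero h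
      have hA : A (t + k) i m ≠ 0 := fun h0 => hm (by rw [h0, zero_mul])
      have hW : windowProd A t k m j ≠ 0 := fun h0 => hm (by rw [h0, mul_zero])
      have h1 : α ^ (k + 1) ≤ A (t + k) i m * windowProd A t k m j := by
        rw [pow_succ, mul_comm]
        exact mul_le_mul (hsafe (t + k) (le_add_right ht) i m hA)
          (ih m j hW) (by positivity) (hnn (t + k) (le_add_right ht) i m)
      refine h1.trans (Finset.single_le_sum (f := fun m => A (t + k) i m * windowProd A t k m j)
        (fun m _ => mul_nonneg (hnn (t + k) (le_add_right ht) i m)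
          (windowProd_nonneg hnn ht k m j)) (Finset.mem_univ m))

/-- If `(A(t))_{t≥1}` is a sequence of `α`-safe column-stochastic `n×n` matrices with
positive diagonal entries whose associated dynamic graph has finite dynamic diameter `D`
(every window of `D` consecutive graphs composes to the complete graph, i.e. all entries
of `A(t+D-1)⋯A(t)` are positive), and `v ∈ ℝ^n` is nonnegative, then for all `i` and all
`t ≥ D`, `α^D · (∑ k, v k) ≤ (A(t)⋯A(1)v)_i ≤ ∑ k, v k`. -/
theorem stmt1 {n : ℕ} (α : ℝ) (hα : 0 < α) (D : ℕ) (hD : 0 < D)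
    (A : ℕ → Matrix (Fin n) (Fin n) ℝ)
    (hnn : ∀ t, 1 ≤ t → ∀ i j, 0 ≤ A t i j)
    (hsafe : ∀ t, 1 ≤ t → ∀ i j, A t i j ≠ 0 → α ≤ A t i j)
    (hcol : ∀ t, 1 ≤ t → ∀ j, ∑ i, A t i j = 1)
    (hdiag : ∀ t, 1 ≤ t → ∀ i, 0 < A t i i)
    (hdiam : ∀ t, 1 ≤ t → ∀ i j, 0 < windowProd A t D i j)
    (v : Fin n → ℝ) (hv : ∀ i, 0 ≤ v i) :
    ∀ i : Fin n, ∀ t, D ≤ t →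
      α ^ D * ∑ k, v k ≤ (windowProd A 1 t).mulVec v i ∧
      (windowProd A 1 t).mulVec v i ≤ ∑ k, v k := by
  intro i t htD
  constructor
  · -- lower bound
    set s := t - D with hs
    have hts : t = s + D := by omega
    rw [hts, windowProd_add]
    set Q := windowProd A 1 s with hQ
    set W := windowProd A (1 + s) D with hW
    rw [← Matrix.mulVec_mulVec]
    set u := Q.mulVec v with hu
    have hu_nn : ∀ k, 0 ≤ u k := by
      intro k
      simp only [hu, Matrix.mulVec, dotProduct]
      exact Finset.sum_nonneg fun j _ => mul_nonneg (windowProd_nonneg hnn le_rfl s k j) (hv j)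
    have hu_sum : ∑ k, u k = ∑ k, v k := by
      simp only [hu, Matrix.mulVec, dotProduct]
      rw [Finset.sum_comm]
      refine Finset.sum_congr rfl fun j _ => ?_
      rw [← Finset.sum_mul, windowProd_colsum hcol le_rfl s j, one_mul]
    have hW_ge : ∀ a b, α ^ D ≤ W a b := fun a b =>
      windowProd_safe hnn hsafe hα (Nat.le_add_right 1 s) D a b
        (ne_of_gt (hdiam (1 + s) (Nat.le_add_right 1 s) a b))
    calc α ^ D * ∑ k, v k = ∑ k, α ^ D * u k := by
            rw [← Finset.mul_sum, hu_sum]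
      _ ≤ ∑ k, W i k * u k :=
            Finset.sum_le_sum fun k _ => mul_le_mul_of_nonneg_right (hW_ge i k) (hu_nn k)
      _ = W.mulVec u i := rfl
  · -- upper bound
    have hP_nn := windowProd_nonneg hnn (le_refl 1) t
    have hP_le : ∀ j, windowProd A 1 t i j ≤ 1 := by
      intro j
      rw [← windowProd_colsum hcol (le_refl 1) t j]
      exact Finset.single_le_sum (fun m _ => hP_nn m j) (Finset.mem_univ i)
    calc (windowProd A 1 t).mulVec v i = ∑ j, windowProd A 1 t i j * v j := rfl
      _ ≤ ∑ j, v j :=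
            Finset.sum_le_sum fun j _ => by
              calc windowProd A 1 t i j * v j ≤ 1 * v j :=
                    mul_le_mul_of_nonneg_right (hP_le j) (hv j)
                _ = v j := one_mul _
end

section
/- For any row-stochastic matrix P and any vector v, osc(P·v) ≤ δ(P)·osc(v), where osc(v) = max_i v_i − min_i v_i and δ is the Dobrushin ergodic coefficient. -/
/-- Dobrushin's ergodic coefficient `δ(P) = 1 − min_{i≠j} ∑_k min(P_{i,k}, P_{j,k})`. -/
noncomputable def dobrushin {n : ℕ} (P : Matrix (Fin n) (Fin n) ℝ) : ℝ :=
  1 - ⨅ p : {q : Fin n × Fin n // q.1 ≠ q.2}, ∑ k, min (P p.1.1 k) (P p.1.2 k)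

/-- The oscillation `osc(v) = max_i v_i − min_i v_i`. -/
noncomputable def osc {n : ℕ} (v : Fin n → ℝ) : ℝ := (⨆ i, v i) - ⨅ i, v i

lemma key_lemma {n : ℕ} (P : Matrix (Fin n) (Fin n) ℝ)
    (hnn : ∀ i j, 0 ≤ P i j) (hrow : ∀ i, ∑ j, P i j = 1) (v : Fin n → ℝ)
    (i j : Fin n) (M m : ℝ) (hM : ∀ k, v k ≤ M) (hm : ∀ k, m ≤ v k) :
    P.mulVec v i - P.mulVec v j ≤ (1 - ∑ k, min (P i k) (P j k)) * (M - m) := by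
  have h1 : P.mulVec v i = ∑ k, P i k * v k := by
    simp [Matrix.mulVec, dotProduct]
  have h2 : P.mulVec v j = ∑ k, P j k * v k := by
    simp [Matrix.mulVec, dotProduct]
  have hSi : ∑ k, (P i k - min (P i k) (P j k)) = 1 - ∑ k, min (P i k) (P j k) := by
    rw [Finset.sum_sub_distrib, hrow]
  have hSj : ∑ k, (P j k - min (P i k) (P j k)) = 1 - ∑ k, min (P i k) (P j k) := by
    rw [Finset.sum_sub_distrib, hrow]
  have hA : ∑ k, (P i k - min (P i k) (P j k)) * v k
      ≤ ∑ k, (P i k - min (P i k) (P j k)) * M := by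
    apply Finset.sum_le_sum; intro k _
    exact mul_le_mul_of_nonneg_left (hM k) (sub_nonneg.mpr (min_le_left _ _))
  have hB : ∑ k, (P j k - min (P i k) (P j k)) * m
      ≤ ∑ k, (P j k - min (P i k) (P j k)) * v k := by
    apply Finset.sum_le_sum; intro k _
    exact mul_le_mul_of_nonneg_left (hm k) (sub_nonneg.mpr (min_le_right _ _))
  have heq : P.mulVec v i - P.mulVec v j
      = (∑ k, (P i k - min (P i k) (P j k)) * v k)
        - ∑ k, (P j k - min (P i k) (P j k)) * v k := by
    rw [h1, h2]
    simp only [sub_mul, Finset.sum_sub_distrib]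
    ring
  calc P.mulVec v i - P.mulVec v j
      = (∑ k, (P i k - min (P i k) (P j k)) * v k)
        - ∑ k, (P j k - min (P i k) (P j k)) * v k := heq
    _ ≤ (∑ k, (P i k - min (P i k) (P j k)) * M)
        - ∑ k, (P j k - min (P i k) (P j k)) * m := sub_le_sub hA hB
    _ = (1 - ∑ k, min (P i k) (P j k)) * M
        - (1 - ∑ k, min (P i k) (P j k)) * m := by
        rw [← Finset.sum_mul, ← Finset.sum_mul, hSi, hSj]
    _ = (1 - ∑ k, min (P i k) (P j k)) * (M - m) := by ring

/-- For any row-stochastic matrix `P` and any vector `v`,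
`osc(P·v) ≤ δ(P)·osc(v)`. -/
theorem stmt3 {n : ℕ} (hn : 0 < n) (P : Matrix (Fin n) (Fin n) ℝ)
    (hnn : ∀ i j, 0 ≤ P i j) (hrow : ∀ i, ∑ j, P i j = 1) (v : Fin n → ℝ) :
    osc (P.mulVec v) ≤ dobrushin P * osc v := by
  haveI : Nonempty (Fin n) := Fin.pos_iff_nonempty.mp hn
  set S : {q : Fin n × Fin n // q.1 ≠ q.2} → ℝ :=
    fun p => ∑ k, min (P p.1.1 k) (P p.1.2 k) with hS
  have hbddS : BddBelow (Set.range S) := by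
    refine ⟨0, ?_⟩
    rintro x ⟨p, rfl⟩
    exact Finset.sum_nonneg fun k _ => le_min (hnn _ _) (hnn _ _)
  -- bounds for v
  have hbA : BddAbove (Set.range v) := (Set.finite_range v).bddAbove
  have hbB : BddBelow (Set.range v) := (Set.finite_range v).bddBelow
  have hM : ∀ k, v k ≤ ⨆ i, v i := fun k => le_ciSup hbA k
  have hm : ∀ k, (⨅ i, v i) ≤ v k := fun k => ciInf_le hbB k
  have hoscv : 0 ≤ osc v := by
    have := (hm (Classical.arbitrary (Fin n))).trans (hM (Classical.arbitrary (Fin n)))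
    simpa [osc, sub_nonneg] using this
  obtain ⟨i0, hi0⟩ := Finite.exists_max (P.mulVec v)
  obtain ⟨j0, hj0⟩ := Finite.exists_min (P.mulVec v)
  have hosc : osc (P.mulVec v) = P.mulVec v i0 - P.mulVec v j0 := by
    unfold osc
    congr 1
    · exact le_antisymm (ciSup_le hi0) (le_ciSup (Set.finite_range _).bddAbove i0)
    · exact le_antisymm (ciInf_le (Set.finite_range _).bddBelow j0) (le_ciInf hj0)
  by_cases hij : i0 = j0
  · rw [hosc, hij, sub_self]
    have hD1 : (⨅ p, S p) ≤ 1 := by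
      by_cases hne : Nonempty {q : Fin n × Fin n // q.1 ≠ q.2}
      · obtain ⟨⟨⟨a, b⟩, hab⟩⟩ := hne
        refine (ciInf_le hbddS ⟨(a, b), hab⟩).trans ?_
        calc ∑ k, min (P a k) (P b k) ≤ ∑ k, P a k :=
              Finset.sum_le_sum fun k _ => min_le_left _ _
          _ = 1 := hrow a
      · haveI := not_nonempty_iff.mp hne
        rw [Real.iInf_of_isEmpty]
        norm_num
    have : 0 ≤ dobrushin P := by
      unfold dobrushin
      linarith
    positivity
  · rw [hosc]
    have hkey := key_lemma P hnn hrow v i0 j0 (⨆ i, v i) (⨅ i, v i) hM hm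
    refine hkey.trans ?_
    have hDle : (⨅ p, S p) ≤ ∑ k, min (P i0 k) (P j0 k) :=
      ciInf_le hbddS ⟨(i0, j0), hij⟩
    have : (1 - ∑ k, min (P i0 k) (P j0 k)) ≤ dobrushin P := by
      unfold dobrushin
      have : (⨅ p : {q : Fin n × Fin n // q.1 ≠ q.2}, ∑ k, min (P p.1.1 k) (P p.1.2 k)) = ⨅ p, S p := rfl
      rw [this]
      linarith
    calc (1 - ∑ k, min (P i0 k) (P j0 k)) * ((⨆ i, v i) - ⨅ i, v i)
        ≤ dobrushin P * ((⨆ i, v i) - ⨅ i, v i) :=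
          mul_le_mul_of_nonneg_right this (by simpa [osc] using hoscv)
      _ = dobrushin P * osc v := rfl
end

section
/- The Dobrushin ergodic coefficient is sub-multiplicative on stochastic matrices: for row-stochastic matrices P and Q of the same size, δ(P·Q) ≤ δ(P)·δ(Q). -/
open Finset Matrix

section Contraction

variable {ι κ : Type*} [Fintype ι] [Fintype κ]

theorem sum_min_eq_one_sub_half_sum_abs_sub {f g : ι → ℝ} (hf : ∑ k, f k = 1)
    (hg : ∑ k, g k = 1) : ∑ k, min (f k) (g k) = 1 - (∑ k, |f k - g k|) / 2 := by
  have hmin k : min (f k) (g k) = (f k + g k - |f k - g k|) / 2 := by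
    rw [show min (f k) (g k) = f k ⊓ g k from rfl, inf_eq_half_smul_add_sub_abs_sub' ℝ,
      smul_eq_mul, abs_sub_comm]
    ring
  simp only [hmin, ← sum_div, sum_sub_distrib, sum_add_distrib, hf, hg]
  ring

theorem sum_sum_mul_mul_sub {R : Type*} [CommRing R] (u v f : ι → R) :
    ∑ a, ∑ b, u a * v b * (f a - f b) =
      (∑ a, u a * f a) * ∑ b, v b - (∑ a, u a) * ∑ b, v b * f b := by
  simp only [sum_mul_sum, ← sum_sub_distrib]
  exact sum_congr rfl fun a _ => sum_congr rfl fun b _ => by ring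

theorem mul_sum_abs_sub_vecMul_le {Q : Matrix ι κ ℝ} {d : ℝ}
    (hQ : ∀ a b, ∑ k, |Q a k - Q b k| ≤ 2 * d) {u v : ι → ℝ} (hu : 0 ≤ u) (hv : 0 ≤ v)
    (huv : ∑ a, u a = ∑ b, v b) :
    (∑ a, u a) * ∑ k, |((u - v) ᵥ* Q) k| ≤ 2 * d * (∑ a, u a) ^ 2 := by
  set c := ∑ a, u a
  have hc : 0 ≤ c := sum_nonneg fun a _ => hu a
  have coupling k : c * ((u - v) ᵥ* Q) k = ∑ a, ∑ b, u a * v b * (Q a k - Q b k) := by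
    rw [sum_sum_mul_mul_sub, ← huv, sub_vecMul]
    simp only [Pi.sub_apply, vecMul, dotProduct]
    ring
  calc c * ∑ k, |((u - v) ᵥ* Q) k|
      = ∑ k, |∑ a, ∑ b, u a * v b * (Q a k - Q b k)| := by
        simp only [mul_sum, ← coupling, abs_mul, abs_of_nonneg hc]
    _ ≤ ∑ k, ∑ a, ∑ b, u a * v b * |Q a k - Q b k| := by
        gcongr with k
        refine (abs_sum_le_sum_abs _ _).trans (sum_le_sum fun a _ => ?_)
        refine (abs_sum_le_sum_abs _ _).trans (sum_le_sum fun b _ => ?_)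
        rw [abs_mul, abs_of_nonneg (mul_nonneg (hu a) (hv b))]
    _ = ∑ a, ∑ b, u a * v b * ∑ k, |Q a k - Q b k| := by
        simp only [mul_sum]
        rw [sum_comm]
        exact sum_congr rfl fun a _ => sum_comm
    _ ≤ ∑ a, ∑ b, u a * v b * (2 * d) := by
        gcongr with a _ b _
        · exact mul_nonneg (hu a) (hv b)
        · exact hQ a b
    _ = 2 * d * c ^ 2 := by
        simp only [← sum_mul, ← mul_sum, ← huv]
        ring

theorem sum_abs_vecMul_le {Q : Matrix ι κ ℝ} {d : ℝ}
    (hQ : ∀ a b, ∑ k, |Q a k - Q b k| ≤ 2 * d) {x : ι → ℝ} (hx : ∑ l, x l = 0) :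
    ∑ k, |(x ᵥ* Q) k| ≤ d * ∑ l, |x l| := by
  obtain ⟨c, hc⟩ : ∃ c, ∑ l, x⁺ l = c := ⟨_, rfl⟩
  have hmass : ∑ l, x⁻ l = c := by
    have := congrArg (fun y : ι → ℝ => ∑ l, y l) (posPart_sub_negPart x)
    simp only [Pi.sub_apply, sum_sub_distrib, hx] at this
    linarith
  have habs : ∑ l, |x l| = 2 * c := by
    simp only [← posPart_add_negPart, sum_add_distrib, ← Pi.posPart_apply, ← Pi.negPart_apply,
      hc, hmass]
    ring
  have key := mul_sum_abs_sub_vecMul_le hQ (posPart_nonneg x) (negPart_nonneg x)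
    (hc.trans hmass.symm)
  rw [posPart_sub_negPart, hc] at key
  rw [habs]
  rcases (hc ▸ sum_nonneg fun l _ => posPart_nonneg (x l) : 0 ≤ c).eq_or_lt with hc0 | hc0
  · have hx0 : x = 0 := funext fun l => abs_eq_zero.1 <|
      (sum_eq_zero_iff_of_nonneg fun l _ => abs_nonneg (x l)).1 (by linarith) l (mem_univ l)
    simp [hx0, ← hc0]
  · exact le_of_mul_le_mul_left (key.trans_eq (by ring)) hc0

end Contraction

theorem Matrix.sum_mul_apply_eq_one {ι κ ν : Type*} [Fintype κ] [Fintype ν]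
    {P : Matrix ι κ ℝ} {Q : Matrix κ ν ℝ} (hP : ∀ i, ∑ j, P i j = 1) (hQ : ∀ i, ∑ j, Q i j = 1)
    (i : ι) : ∑ j, (P * Q) i j = 1 := by
  simp only [mul_apply]
  rw [sum_comm]
  simp [← mul_sum, hQ, hP]

section Dobrushin

variable {n : ℕ} {P : Matrix (Fin n) (Fin n) ℝ}

-- The infimum over the empty type of pairs is the junk value `0`.
theorem dobrushin_of_le_one (hn : n ≤ 1) : dobrushin P = 1 := by
  have : Subsingleton (Fin n) := Fin.subsingleton_iff_le_one.2 hn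
  have : IsEmpty {q : Fin n × Fin n // q.1 ≠ q.2} := ⟨fun q => q.2 (Subsingleton.elim _ _)⟩
  simp [dobrushin, Real.iInf_of_isEmpty]

theorem half_sum_abs_sub_le_dobrushin (hP : ∀ i, ∑ j, P i j = 1) {i j : Fin n} (hij : i ≠ j) :
    (∑ k, |P i k - P j k|) / 2 ≤ dobrushin P := by
  have hinf := ciInf_le (f := fun p : {q : Fin n × Fin n // q.1 ≠ q.2} =>
    ∑ k, min (P p.1.1 k) (P p.1.2 k)) (Set.finite_range _).bddBelow ⟨(i, j), hij⟩
  rw [sum_min_eq_one_sub_half_sum_abs_sub (hP i) (hP j)] at hinf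
  rw [dobrushin]
  linarith

theorem dobrushin_nonneg (hP : ∀ i, ∑ j, P i j = 1) (hn : 1 < n) : 0 ≤ dobrushin P :=
  (div_nonneg (sum_nonneg fun _ _ => abs_nonneg _) zero_le_two).trans
    (half_sum_abs_sub_le_dobrushin hP (i := ⟨0, by omega⟩) (j := ⟨1, hn⟩) (by simp))

theorem sum_abs_sub_le_two_mul_dobrushin (hP : ∀ i, ∑ j, P i j = 1) (hn : 1 < n) (i j : Fin n) :
    ∑ k, |P i k - P j k| ≤ 2 * dobrushin P := by
  rcases eq_or_ne i j with rfl | hij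
  · simpa using dobrushin_nonneg hP hn
  · linarith [half_sum_abs_sub_le_dobrushin hP hij]

theorem dobrushin_le_of_forall_half_sum_abs_sub_le (hP : ∀ i, ∑ j, P i j = 1) (hn : 1 < n)
    {c : ℝ} (h : ∀ i j, i ≠ j → (∑ k, |P i k - P j k|) / 2 ≤ c) : dobrushin P ≤ c := by
  have : Nonempty {q : Fin n × Fin n // q.1 ≠ q.2} :=
    ⟨⟨(⟨0, by omega⟩, ⟨1, hn⟩), by simp⟩⟩
  rw [dobrushin, sub_le_comm]
  refine le_ciInf fun ⟨(i, j), hij⟩ => ?_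
  rw [sum_min_eq_one_sub_half_sum_abs_sub (hP i) (hP j)]
  linarith [h i j hij]

end Dobrushin

theorem stmt4_general {n : ℕ} (P Q : Matrix (Fin n) (Fin n) ℝ)
    (hProw : ∀ i, ∑ j, P i j = 1)
    (hQrow : ∀ i, ∑ j, Q i j = 1) :
    dobrushin (P * Q) ≤ dobrushin P * dobrushin Q := by
  rcases le_or_gt n 1 with hn | hn
  · simp [dobrushin_of_le_one hn]
  refine dobrushin_le_of_forall_half_sum_abs_sub_le (sum_mul_apply_eq_one hProw hQrow) hn
    fun i j hij => ?_
  have hmass : ∑ l, (P i - P j) l = 0 := by simp [sum_sub_distrib, hProw]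
  calc (∑ k, |(P * Q) i k - (P * Q) j k|) / 2
      = (∑ k, |((P i - P j) ᵥ* Q) k|) / 2 := by simp [mul_apply_eq_vecMul, sub_vecMul]
    _ ≤ dobrushin Q * (∑ l, |P i l - P j l|) / 2 := by
        gcongr
        exact sum_abs_vecMul_le (sum_abs_sub_le_two_mul_dobrushin hQrow hn) hmass
    _ ≤ dobrushin Q * dobrushin P := by
        rw [mul_div_assoc]
        exact mul_le_mul_of_nonneg_left (half_sum_abs_sub_le_dobrushin hProw hij)
          (dobrushin_nonneg hQrow hn)
    _ = dobrushin P * dobrushin Q := mul_comm _ _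

/-- Sub-multiplicativity of the Dobrushin ergodic coefficient on row-stochastic
matrices: `δ(P·Q) ≤ δ(P)·δ(Q)`. -/
theorem stmt4 {n : ℕ} (P Q : Matrix (Fin n) (Fin n) ℝ)
    (hPnn : ∀ i j, 0 ≤ P i j) (hProw : ∀ i, ∑ j, P i j = 1)
    (hQnn : ∀ i j, 0 ≤ Q i j) (hQrow : ∀ i, ∑ j, Q i j = 1) :
    dobrushin (P * Q) ≤ dobrushin P * dobrushin Q :=
  stmt4_general P Q hProw hQrow
end

section
/- Let M be a real n×n matrix whose off-diagonal entries are nonnegative and whose associated graph (with an edge (j,i) whenever i≠j and M_{i,j}>0, and self-loops everywhere) is strongly connected. If M·z = 0 admits a positive solution z, then the kernel of M is exactly the one-dimensional space ℝ·z, and moreover every nonzero nonnegative vector y with M·y = μ·y for a real μ satisfies μ = 0 and y is positive. -/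
private lemma prop_back {n : ℕ} {r : Fin n → Fin n → Prop} {P : Fin n → Prop}
    (hstep : ∀ a b, r a b → P b → P a) {i j : Fin n}
    (h : Relation.ReflTransGen r i j) : P j → P i := by
  induction h with
  | refl => exact id
  | tail _ step ih => exact fun hc => ih (hstep _ _ step hc)

/-- Let `M` be a real `n×n` matrix with nonnegative off-diagonal entries (a Metzler
matrix) whose associated graph (edge `(j,i)` whenever `i ≠ j` and `M i j > 0`, plus
self-loops, here built into reflexive-transitive closure) is strongly connected.
If `M·z = 0` has a positive solution `z`, then `ker M = ℝ·z`, and every nonzero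
nonnegative eigenvector `y` of `M` for a real eigenvalue `μ` satisfies `μ = 0`
and `y` is positive. -/
theorem stmt5 {n : ℕ} (M : Matrix (Fin n) (Fin n) ℝ)
    (hoff : ∀ i j, i ≠ j → 0 ≤ M i j)
    (hconn : ∀ i j : Fin n, Relation.ReflTransGen (fun a b => a ≠ b ∧ 0 < M b a) i j)
    (z : Fin n → ℝ) (hz : ∀ i, 0 < z i) (hMz : M.mulVec z = 0) :
    (∀ y : Fin n → ℝ, M.mulVec y = 0 ↔ ∃ c : ℝ, y = c • z) ∧
    (∀ (y : Fin n → ℝ) (μ : ℝ), y ≠ 0 → (∀ i, 0 ≤ y i) →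
      M.mulVec y = μ • y → μ = 0 ∧ ∀ i, 0 < y i) := by
  have hsum : ∀ (u : Fin n → ℝ) (t : ℝ) (b : Fin n),
      ∑ j, M b j * (u j - t * z j) = M.mulVec u b - t * M.mulVec z b := by
    intro u t b
    simp only [Matrix.mulVec, dotProduct, Finset.mul_sum, mul_sub,
      Finset.sum_sub_distrib]
    congr 1
    exact Finset.sum_congr rfl fun j _ => by ring
  have hyrec : ∀ (u : Fin n → ℝ) (j : Fin n), u j = (u j / z j) * z j :=
    fun u j => (div_mul_cancel₀ _ (ne_of_gt (hz j))).symm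
  constructor
  · intro y
    constructor
    · intro hMy
      rcases Nat.eq_zero_or_pos n with h0 | hn
      · exact ⟨0, funext fun i => absurd i.isLt (by omega)⟩
      · haveI : Nonempty (Fin n) := ⟨⟨0, hn⟩⟩
        set w : Fin n → ℝ := fun k => y k / z k with hw
        obtain ⟨i0, -, hi0⟩ := Finset.exists_max_image Finset.univ w
          ⟨Classical.arbitrary _, Finset.mem_univ _⟩
        have key : ∀ b, w b = w i0 → ∀ a, 0 < M b a → w a = w i0 := by
          intro b hb a hMba
          have hsum0 : ∑ j, M b j * (y j - w i0 * z j) = 0 := by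
            rw [hsum, hMy, hMz]; simp
          have hterm : ∀ j ∈ Finset.univ, M b j * (y j - w i0 * z j) ≤ 0 := by
            intro j _
            by_cases hjb : j = b
            · subst hjb
              have : y j = w i0 * z j := by rw [← hb]; exact hyrec y j
              simp [this]
            · have h1 : 0 ≤ M b j := hoff b j (fun h => hjb h.symm)
              have h2 : y j - w i0 * z j ≤ 0 := by
                have hyj := hyrec y j
                have hwj : w j ≤ w i0 := hi0 j (Finset.mem_univ j)
                nlinarith [hz j]
              exact mul_nonpos_of_nonneg_of_nonpos h1 h2
          have hza := (Finset.sum_eq_zero_iff_of_nonpos hterm).mp hsum0 a (Finset.mem_univ a)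
          have : y a = w i0 * z a := by
            rcases mul_eq_zero.mp hza with h | h
            · exact absurd h (ne_of_gt hMba)
            · linarith
          show y a / z a = w i0
          rw [this]
          exact mul_div_cancel_right₀ _ (ne_of_gt (hz a))
        have hall : ∀ i, w i = w i0 := by
          intro i
          exact prop_back (P := fun k => w k = w i0)
            (fun a b hab hb => key b hb a hab.2) (hconn i i0) rfl
        refine ⟨w i0, funext fun k => ?_⟩
        have h2 : w k = w i0 := hall k
        simp only [Pi.smul_apply, smul_eq_mul]
        rw [← h2]
        exact hyrec y k
    · rintro ⟨c, rfl⟩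
      rw [Matrix.mulVec_smul, hMz, smul_zero]
  · intro y μ hy0 hynn hMy
    obtain ⟨j0, hj0⟩ := Function.ne_iff.mp hy0
    have hyj0 : 0 < y j0 := (hynn j0).lt_of_ne (fun h => hj0 h.symm)
    have hpos : ∀ i, 0 < y i := by
      intro i
      rcases (hynn i).lt_or_eq with h | h
      · exact h
      · exfalso
        have hstep : ∀ b, y b = 0 → ∀ a, 0 < M b a → y a = 0 := by
          intro b hb a hMba
          have hsum0 : ∑ j, M b j * y j = 0 := by
            have : M.mulVec y b = (μ • y) b := by rw [hMy]
            simpa [Matrix.mulVec, dotProduct, hb] using this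
          have hterm : ∀ j ∈ Finset.univ, 0 ≤ M b j * y j := by
            intro j _
            by_cases hjb : j = b
            · subst hjb; simp [hb]
            · exact mul_nonneg (hoff b j (fun h => hjb h.symm)) (hynn j)
          have hza := (Finset.sum_eq_zero_iff_of_nonneg hterm).mp hsum0 a (Finset.mem_univ a)
          rcases mul_eq_zero.mp hza with h | h
          · exact absurd h (ne_of_gt hMba)
          · exact h
        have : y j0 = 0 := prop_back (P := fun k => y k = 0)
          (fun a b hab hb => hstep b hb a hab.2) (hconn j0 i) h.symm
        exact absurd this (ne_of_gt hyj0)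
    haveI : Nonempty (Fin n) := ⟨j0⟩
    set r : Fin n → ℝ := fun k => y k / z k with hr
    obtain ⟨i1, -, hi1⟩ := Finset.exists_min_image Finset.univ r ⟨j0, Finset.mem_univ _⟩
    obtain ⟨i2, -, hi2⟩ := Finset.exists_max_image Finset.univ r ⟨j0, Finset.mem_univ _⟩
    have hmu : ∀ (b : Fin n) (t : ℝ), μ * y b - 0 = M.mulVec y b - t * M.mulVec z b := by
      intro b t
      rw [hMy, hMz]; simp
    have h1 : μ * y i1 = ∑ j, M i1 j * (y j - r i1 * z j) := by
      rw [hsum]; rw [← hmu i1 (r i1)]; ring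
    have h2 : μ * y i2 = ∑ j, M i2 j * (y j - r i2 * z j) := by
      rw [hsum]; rw [← hmu i2 (r i2)]; ring
    have hge : 0 ≤ μ * y i1 := by
      rw [h1]
      apply Finset.sum_nonneg
      intro j _
      by_cases hjb : j = i1
      · subst hjb
        have : y j = r j * z j := hyrec y j
        simp [this]
      · apply mul_nonneg (hoff i1 j (fun h => hjb h.symm))
        have hyj := hyrec y j
        have : r i1 ≤ r j := hi1 j (Finset.mem_univ j)
        nlinarith [hz j]
    have hle : μ * y i2 ≤ 0 := by
      rw [h2]
      apply Finset.sum_nonpos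
      intro j _
      by_cases hjb : j = i2
      · subst hjb
        have : y j = r j * z j := hyrec y j
        simp [this]
      · apply mul_nonpos_of_nonneg_of_nonpos (hoff i2 j (fun h => hjb h.symm))
        have hyj := hyrec y j
        have : r j ≤ r i2 := hi2 j (Finset.mem_univ j)
        nlinarith [hz j]
    have hμ : μ = 0 := by
      have p1 := hpos i1
      have p2 := hpos i2
      have ha : 0 ≤ μ := by nlinarith
      have hb : μ ≤ 0 := by nlinarith
      linarith
    exact ⟨hμ, hpos⟩
end

section
/- Let φ : G → B be a graph fibration. For any deterministic distributed algorithm A with simple broadcast communication, if C_0, C_1, ... is the execution of A on B from initial global state C_0, then the sequence (C_0)^φ, (C_1)^φ, ... obtained by lifting states fibrewise is the execution of A on G from initial global state (C_0)^φ (Lifting Lemma). -/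
/-- **Lifting Lemma.** Let `φ = (φV, φE) : G → B` be a graph fibration (a surjective
graph morphism with unique lifting of edges at targets). For any deterministic
distributed algorithm with simple broadcast communication — state set `Q`, message set
`M`, sending function `σ : Q → M` and transition function `δ` taking the multiset of
received messages — if `C 0, C 1, …` is the execution of the algorithm on `B`, then the
fibrewise lifted sequence `k ↦ C k ∘ φV` is the execution of the algorithm on `G` from
the lifted initial state: the one-round network transition commutes with lifting. -/
theorem stmt12 {VG EG VB EB Q M : Type} [Fintype EG] [Fintype EB]
    [DecidableEq VG] [DecidableEq VB]
    (sG tG : EG → VG) (sB tB : EB → VB)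
    (φV : VG → VB) (φE : EG → EB)
    (hs : ∀ e, sB (φE e) = φV (sG e)) (ht : ∀ e, tB (φE e) = φV (tG e))
    (hVsurj : Function.Surjective φV) (hEsurj : Function.Surjective φE)
    (hlift : ∀ (e : EB) (i : VG), φV i = tB e → ∃! f : EG, φE f = e ∧ tG f = i)
    (σ : Q → M) (δ : Q → Multiset M → Q)
    (C : ℕ → VB → Q)
    (hC : ∀ k, C (k + 1) = fun i => δ (C k i)
      ((Finset.univ.val.filter (fun e => tB e = i)).map (fun e => σ (C k (sB e))))) :
    ∀ k, (fun i => C (k + 1) (φV i)) = fun i => δ (C k (φV i))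
      ((Finset.univ.val.filter (fun e => tG e = i)).map (fun e => σ (C k (φV (sG e))))) := by
  intro k
  funext i
  classical
  rw [hC k]
  beta_reduce
  congr 1
  set A : Finset EG := Finset.univ.filter (fun e => tG e = i) with hA
  set B' : Finset EB := Finset.univ.filter (fun e => tB e = φV i) with hB
  have hinj : Set.InjOn φE ↑A := by
    intro x hx y hy hxy
    simp only [hA, Finset.coe_filter, Set.mem_setOf_eq] at hx hy
    have hlx := hlift (φE x) i (by rw [ht x, hx.2])
    obtain ⟨f, _, huniq⟩ := hlx
    have h1 : x = f := huniq x ⟨rfl, hx.2⟩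
    have h2 : y = f := huniq y ⟨hxy.symm, hy.2⟩
    exact h1.trans h2.symm
  have himg : B' = A.image φE := by
    ext e
    simp only [hA, hB, Finset.mem_filter, Finset.mem_univ, true_and, Finset.mem_image]
    constructor
    · intro he
      obtain ⟨f, hf, _⟩ := hlift e i he.symm
      exact ⟨f, hf.2, hf.1⟩
    · rintro ⟨f, hf, rfl⟩
      rw [ht f, hf]
  have hval : B'.val = A.val.map φE := by
    rw [himg, Finset.image_val, Multiset.dedup_eq_self.mpr]
    exact (Multiset.nodup_map_iff_inj_on A.nodup).mpr (fun x hx y hy => hinj hx hy)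
  calc (Finset.univ.val.filter (fun e => tB e = φV i)).map (fun e => σ (C k (sB e)))
      = B'.val.map (fun e => σ (C k (sB e))) := by rw [hB, Finset.filter_val]
    _ = (A.val.map φE).map (fun e => σ (C k (sB e))) := by rw [hval]
    _ = A.val.map (fun e => σ (C k (sB (φE e)))) := by rw [Multiset.map_map]; rfl
    _ = A.val.map (fun e => σ (C k (φV (sG e)))) := Multiset.map_congr rfl (fun e _ => by rw [hs e])
    _ = (Finset.univ.val.filter (fun e => tG e = i)).map (fun e => σ (C k (φV (sG e)))) := by rw [hA, Finset.filter_val]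
end

section
/- If φ : G → B is a graph fibration and an algorithm A δ-computes a function f (of the input values) on both graphs G and B, then for every valuation v of the vertices of B, f(v^φ) = f(v), where v^φ is the fibrewise lifting of v. -/
/-!
The fibration gives, for every vertex `i` of `G`, a bijection between the in-edges of `i`
and those of `φ i` that respects sources up to `φ`. Hence a state of `B` pulled back along
`φ` receives, at `i`, exactly the messages that `φ i` receives, and the execution of the
algorithm on `G` from `v^φ` is the execution on `B` from `v` pulled back along `φ` (the
Lifting Lemma, `execution_comp`). The outputs at a vertex `i` of `G` therefore tend both
to `f(v^φ)` and to `f(v)`, and limits in a metric space are unique.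
-/

open Finset

section Execution

variable {V E Q M : Type*} [Fintype E] [DecidableEq V]

def inMessages (s t : E → V) (σ : Q → M) (c : V → Q) (i : V) : Multiset M :=
  (univ.val.filter fun e => t e = i).map fun e => σ (c (s e))

def syncStep (s t : E → V) (σ : Q → M) (δ : Q → Multiset M → Q) (c : V → Q) : V → Q :=
  fun i => δ (c i) (inMessages s t σ c i)

def execution (s t : E → V) (σ : Q → M) (δ : Q → Multiset M → Q) (c₀ : V → Q) (k : ℕ) :
    V → Q :=
  (syncStep s t σ δ)^[k] c₀

theorem execution_succ (s t : E → V) (σ : Q → M) (δ : Q → Multiset M → Q) (c₀ : V → Q)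
    (k : ℕ) :
    execution s t σ δ c₀ (k + 1) = syncStep s t σ δ (execution s t σ δ c₀ k) :=
  Function.iterate_succ_apply' _ _ _

end Execution

section Lifting

variable {VG EG VB EB Q M : Type*} [Fintype EG] [Fintype EB]
  [DecidableEq VG] [DecidableEq VB]
  {sG tG : EG → VG} {sB tB : EB → VB} {φV : VG → VB} {φE : EG → EB}

theorem map_filter_target_eq_filter_target (ht : ∀ e, tB (φE e) = φV (tG e))
    (hlift : ∀ (e : EB) (i : VG), φV i = tB e → ∃! f : EG, φE f = e ∧ tG f = i) (i : VG) :
    (univ.val.filter fun e => tG e = i).map φE = univ.val.filter fun e => tB e = φV i := by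
  have hinj : ∀ a ∈ univ.val.filter (fun e => tG e = i),
      ∀ b ∈ univ.val.filter (fun e => tG e = i), φE a = φE b → a = b := by
    intro a ha b hb hab
    rw [Multiset.mem_filter] at ha hb
    obtain ⟨g, -, hg⟩ := hlift (φE a) i (by rw [ht, ha.2])
    rw [hg a ⟨rfl, ha.2⟩, hg b ⟨hab.symm, hb.2⟩]
  refine (Multiset.Nodup.ext ((univ.nodup.filter _).map_on hinj) (univ.nodup.filter _)).2
    fun e => ?_
  simp only [Multiset.mem_map, Multiset.mem_filter, mem_val, mem_univ, true_and]
  constructor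
  · rintro ⟨g, hg, rfl⟩
    rw [ht, hg]
  · intro he
    obtain ⟨g, ⟨hge, hgi⟩, -⟩ := hlift e i he.symm
    exact ⟨g, hgi, hge⟩

theorem inMessages_comp (hs : ∀ e, sB (φE e) = φV (sG e)) (ht : ∀ e, tB (φE e) = φV (tG e))
    (hlift : ∀ (e : EB) (i : VG), φV i = tB e → ∃! f : EG, φE f = e ∧ tG f = i)
    (σ : Q → M) (c : VB → Q) (i : VG) :
    inMessages sG tG σ (c ∘ φV) i = inMessages sB tB σ c (φV i) := by
  rw [inMessages, inMessages, ← map_filter_target_eq_filter_target ht hlift, Multiset.map_map]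
  exact Multiset.map_congr rfl fun e _ => by simp only [Function.comp_apply, hs]

theorem execution_comp (hs : ∀ e, sB (φE e) = φV (sG e)) (ht : ∀ e, tB (φE e) = φV (tG e))
    (hlift : ∀ (e : EB) (i : VG), φV i = tB e → ∃! f : EG, φE f = e ∧ tG f = i)
    (σ : Q → M) (δ : Q → Multiset M → Q) (c₀ : VB → Q) (k : ℕ) :
    execution sG tG σ δ (c₀ ∘ φV) k = execution sB tB σ δ c₀ k ∘ φV := by
  have hstep : Function.Semiconj (· ∘ φV) (syncStep sB tB σ δ) (syncStep sG tG σ δ) :=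
    fun c => funext fun i => by
      simp only [syncStep, Function.comp_apply, inMessages_comp hs ht hlift]
  exact (hstep.iterate_right k c₀).symm

end Lifting

theorem stmt13_general {VG EG VB EB Q M Ω X : Type}
    [Fintype VG] [Fintype EG] [Fintype VB] [Fintype EB]
    [DecidableEq VG] [DecidableEq VB] [MetricSpace X]
    (sG tG : EG → VG) (sB tB : EB → VB)
    (φV : VG → VB) (φE : EG → EB)
    (hs : ∀ e, sB (φE e) = φV (sG e)) (ht : ∀ e, tB (φE e) = φV (tG e))
    (hVsurj : Function.Surjective φV)
    (hlift : ∀ (e : EB) (i : VG), φV i = tB e → ∃! f : EG, φE f = e ∧ tG f = i)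
    (σ : Q → M) (δ : Q → Multiset M → Q) (ι : Ω → Q) (out : Q → X)
    (f : Multiset Ω → X)
    (hcompB : ∀ (v : VB → Ω) (C : ℕ → VB → Q),
      C 0 = (fun i => ι (v i)) →
      (∀ k, C (k + 1) = fun i => δ (C k i)
        ((Finset.univ.val.filter (fun e => tB e = i)).map (fun e => σ (C k (sB e))))) →
      ∀ i, Filter.Tendsto (fun k => out (C k i)) Filter.atTop
        (nhds (f (Multiset.map v Finset.univ.val))))
    (hcompG : ∀ (v : VG → Ω) (C : ℕ → VG → Q),
      C 0 = (fun i => ι (v i)) →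
      (∀ k, C (k + 1) = fun i => δ (C k i)
        ((Finset.univ.val.filter (fun e => tG e = i)).map (fun e => σ (C k (sG e))))) →
      ∀ i, Filter.Tendsto (fun k => out (C k i)) Filter.atTop
        (nhds (f (Multiset.map v Finset.univ.val)))) :
    ∀ v : VB → Ω,
      f (Multiset.map (fun i => v (φV i)) Finset.univ.val) =
        f (Multiset.map v Finset.univ.val) := by
  intro v
  rcases isEmpty_or_nonempty VG with hG | ⟨⟨i⟩⟩
  · have : IsEmpty VB := hVsurj.isEmpty
    simp only [univ_eq_empty, empty_val, Multiset.map_zero]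
  · have hB := hcompB v (execution sB tB σ δ (ι ∘ v)) rfl
      (fun k => execution_succ ..) (φV i)
    have hG := hcompG (v ∘ φV) (execution sG tG σ δ ((ι ∘ v) ∘ φV)) rfl
      (fun k => execution_succ ..) i
    simp only [execution_comp hs ht hlift, Function.comp_apply] at hG
    exact tendsto_nhds_unique hG hB

/-- If `φ : G → B` is a graph fibration, and an algorithm (with states `Q`, messages
`M`, broadcast sending function `σ`, transition function `δ`, input encoding
`ι : Ω → Q`, and output decoding `out : Q → X` into a metric space `X`) δ-computes a
function `f` of the input values on both graphs `G` and `B` — meaning that in every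
execution starting from any valuation, every agent's output converges to the value of
`f` on the inputs — then for every valuation `v` of the vertices of `B`,
`f(v^φ) = f(v)`, where `v^φ := v ∘ φV` is the fibrewise lifting of `v`. -/
theorem stmt13 {VG EG VB EB Q M Ω X : Type}
    [Fintype VG] [Fintype EG] [Fintype VB] [Fintype EB]
    [DecidableEq VG] [DecidableEq VB] [MetricSpace X]
    (sG tG : EG → VG) (sB tB : EB → VB)
    (φV : VG → VB) (φE : EG → EB)
    (hs : ∀ e, sB (φE e) = φV (sG e)) (ht : ∀ e, tB (φE e) = φV (tG e))
    (hVsurj : Function.Surjective φV) (hEsurj : Function.Surjective φE)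
    (hlift : ∀ (e : EB) (i : VG), φV i = tB e → ∃! f : EG, φE f = e ∧ tG f = i)
    (σ : Q → M) (δ : Q → Multiset M → Q) (ι : Ω → Q) (out : Q → X)
    (f : Multiset Ω → X)
    (hcompB : ∀ (v : VB → Ω) (C : ℕ → VB → Q),
      C 0 = (fun i => ι (v i)) →
      (∀ k, C (k + 1) = fun i => δ (C k i)
        ((Finset.univ.val.filter (fun e => tB e = i)).map (fun e => σ (C k (sB e))))) →
      ∀ i, Filter.Tendsto (fun k => out (C k i)) Filter.atTop
        (nhds (f (Multiset.map v Finset.univ.val))))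
    (hcompG : ∀ (v : VG → Ω) (C : ℕ → VG → Q),
      C 0 = (fun i => ι (v i)) →
      (∀ k, C (k + 1) = fun i => δ (C k i)
        ((Finset.univ.val.filter (fun e => tG e = i)).map (fun e => σ (C k (sG e))))) →
      ∀ i, Filter.Tendsto (fun k => out (C k i)) Filter.atTop
        (nhds (f (Multiset.map v Finset.univ.val)))) :
    ∀ v : VB → Ω,
      f (Multiset.map (fun i => v (φV i)) Finset.univ.val) =
        f (Multiset.map v Finset.univ.val) :=
  stmt13_general sG tG sB tB φV φE hs ht hVsurj hlift σ δ ι out f hcompB hcompG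
end

section
/- Let φ : G → B be a fibration with B having m vertices, and let d_{i,j} denote the number of edges from i to j in the multigraph B. If G is symmetric (every edge has a reverse edge), then for all vertices i, j of B: d_{i,j} · |φ^{-1}(j)| = d_{j,i} · |φ^{-1}(i)|. -/
/-- Let `φ : G → B` be a fibration of finite multigraphs, with `d_{i,j}` the number of
edges from `i` to `j` in `B`. If `G` is symmetric (it carries an involution of edges
swapping sources and targets), then for all vertices `i, j` of `B`:
`d_{i,j} · |φ⁻¹(j)| = d_{j,i} · |φ⁻¹(i)|`. -/
theorem stmt15 {VG EG VB EB : Type}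
    [Fintype VG] [Fintype EG] [Fintype VB] [Fintype EB] [DecidableEq VB]
    (sG tG : EG → VG) (sB tB : EB → VB)
    (φV : VG → VB) (φE : EG → EB)
    (hs : ∀ e, sB (φE e) = φV (sG e)) (ht : ∀ e, tB (φE e) = φV (tG e))
    (hVsurj : Function.Surjective φV) (hEsurj : Function.Surjective φE)
    (hlift : ∀ (e : EB) (i : VG), φV i = tB e → ∃! f : EG, φE f = e ∧ tG f = i)
    (ρ : EG → EG) (hρs : ∀ e, sG (ρ e) = tG e) (hρt : ∀ e, tG (ρ e) = sG e)
    (hρρ : ∀ e, ρ (ρ e) = e)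
    (i j : VB) :
    Fintype.card {e : EB // sB e = i ∧ tB e = j} *
        Fintype.card {k : VG // φV k = j} =
      Fintype.card {e : EB // sB e = j ∧ tB e = i} *
        Fintype.card {k : VG // φV k = i} := by
  classical
  have key : ∀ a b : VB,
      Fintype.card {f : EG // φV (sG f) = a ∧ φV (tG f) = b} =
        Fintype.card {e : EB // sB e = a ∧ tB e = b} *
          Fintype.card {k : VG // φV k = b} := by
    intro a b
    rw [← Fintype.card_prod]
    apply Fintype.card_congr
    refine ⟨fun f => (⟨φE f.1, by rw [hs, f.2.1], by rw [ht, f.2.2]⟩,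
        ⟨tG f.1, f.2.2⟩), fun p => ?_, ?_, ?_⟩
    · have hk : φV p.2.1 = tB p.1.1 := by rw [p.2.2, p.1.2.2]
      refine ⟨(hlift p.1.1 p.2.1 hk).choose, ?_, ?_⟩
      · have hspec := (hlift p.1.1 p.2.1 hk).choose_spec.1
        rw [← hs, hspec.1, p.1.2.1]
      · have hspec := (hlift p.1.1 p.2.1 hk).choose_spec.1
        rw [hspec.2, p.2.2]
    · rintro ⟨f, hf1, hf2⟩
      apply Subtype.ext
      exact ((hlift (φE f) (tG f) (ht f).symm).choose_spec.2 f ⟨rfl, rfl⟩).symm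
    · rintro ⟨⟨e, he⟩, ⟨k, hk⟩⟩
      have hk' : φV k = tB e := by rw [hk, he.2]
      have hspec := (hlift e k hk').choose_spec.1
      simp only [Prod.mk.injEq, Subtype.mk.injEq]
      exact ⟨hspec.1, hspec.2⟩
  have swap : ∀ a b : VB,
      Fintype.card {f : EG // φV (sG f) = a ∧ φV (tG f) = b} =
        Fintype.card {f : EG // φV (sG f) = b ∧ φV (tG f) = a} := by
    intro a b
    apply Fintype.card_congr
    refine ⟨fun f => ⟨ρ f.1, by rw [hρs, f.2.2], by rw [hρt, f.2.1]⟩,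
        fun f => ⟨ρ f.1, by rw [hρs, f.2.2], by rw [hρt, f.2.1]⟩,
        fun f => Subtype.ext (hρρ f.1), fun f => Subtype.ext (hρρ f.1)⟩
  rw [← key i j, ← key j i, swap i j]
end

section
/- In the Push-Sum dynamics with column-stochastic update matrices A(t) (entries A_{i,j}(t) = 1/d⁻_j(t) if (j,i) is an edge at round t, else 0), over a dynamic graph with n vertices, self-loops at every vertex, and finite dynamic diameter D, the ratios x_i(t) = y_i(t)/z_i(t) all converge to (∑_k v_k)/(∑_k w_k), where y(0) = v ∈ ℝ^n and z(0) = w ∈ (ℝ_{>0})^n and y(t) = A(t)y(t−1), z(t) = A(t)z(t−1). -/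
/-- **Convergence of Push-Sum.** In the Push-Sum dynamics with column-stochastic update
matrices `A(t)` (with `A(t) i j = 1/d⁻_j(t)` if `(j,i)` is an edge of the dynamic graph
at round `t`, else `0`), over a dynamic graph with `n` vertices, a self-loop at every
vertex and finite dynamic diameter `D` (all entries of every product of `D` consecutive
matrices are positive), the ratios `x_i(t) = y_i(t)/z_i(t)` all converge to
`(∑ k, v k)/(∑ k, w k)`, where `y(0) = v`, `z(0) = w > 0`, `y(t) = A(t)·y(t−1)` and
`z(t) = A(t)·z(t−1)`. -/
theorem stmt17 {n : ℕ} (hn : 0 < n)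
    (E : ℕ → Fin n → Fin n → Prop) [∀ t i j, Decidable (E t i j)]
    (hself : ∀ t i, E t i i)
    (A : ℕ → Matrix (Fin n) (Fin n) ℝ)
    (hA : ∀ t i j, A t i j = if E t j i then
        (1 : ℝ) / ((Finset.univ.filter (fun k => E t j k)).card : ℝ) else 0)
    (D : ℕ) (hD : 0 < D)
    (hdiam : ∀ t i j, 0 < windowProd A t D i j)
    (v w : Fin n → ℝ) (hw : ∀ i, 0 < w i)
    (y z : ℕ → Fin n → ℝ)
    (hy0 : y 0 = v) (hz0 : z 0 = w)
    (hy : ∀ t, y (t + 1) = (A t).mulVec (y t))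
    (hz : ∀ t, z (t + 1) = (A t).mulVec (z t)) :
    ∀ i, Filter.Tendsto (fun t => y t i / z t i) Filter.atTop
      (nhds ((∑ k, v k) / (∑ k, w k))) := by
  have hne : Nonempty (Fin n) := ⟨⟨0, hn⟩⟩
  have hune : (Finset.univ : Finset (Fin n)).Nonempty := Finset.univ_nonempty
  set S : ℝ := ∑ k, w k with hSdef
  set V : ℝ := ∑ k, v k with hVdef
  have hS0 : 0 < S := Finset.sum_pos (fun i _ => hw i) hune
  have hnpos : (0:ℝ) < n := by exact_mod_cast hn
  -- basic facts about A
  have hcard : ∀ t (j : Fin n),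
      0 < ((Finset.univ.filter (fun k => E t j k)).card : ℝ) := by
    intro t j
    have hmem : j ∈ Finset.univ.filter (fun k => E t j k) := by
      simp [hself t j]
    exact_mod_cast Finset.card_pos.2 ⟨j, hmem⟩
  have hAnn : ∀ t i j, 0 ≤ A t i j := by
    intro t i j
    rw [hA t i j]
    split
    · exact le_of_lt (div_pos one_pos (hcard t j))
    · exact le_rfl
  have hAcol : ∀ t j, ∑ i, A t i j = 1 := by
    intro t j
    have h1 : ∑ i, A t i j = ∑ i ∈ Finset.univ.filter (fun k => E t j k),
        (1 : ℝ) / ((Finset.univ.filter (fun k => E t j k)).card : ℝ) := by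
      rw [Finset.sum_filter]
      exact Finset.sum_congr rfl (fun i _ => hA t i j)
    rw [h1, Finset.sum_const, nsmul_eq_mul]
    exact mul_one_div_cancel (ne_of_gt (hcard t j))
  have hAlb : ∀ t i j, 0 < A t i j → 1 / (n:ℝ) ≤ A t i j := by
    intro t i j hpos
    by_cases h : E t j i
    · rw [hA t i j, if_pos h]
      apply one_div_le_one_div_of_le (hcard t j)
      have h2 : (Finset.univ.filter (fun k => E t j k)).card ≤ n := by
        simpa using Finset.card_filter_le Finset.univ (fun k => E t j k)
      exact_mod_cast h2
    · rw [hA t i j, if_neg h] at hpos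
      exact absurd hpos (lt_irrefl 0)
  have hAdiag : ∀ t i, 0 < A t i i := by
    intro t i
    rw [hA t i i, if_pos (hself t i)]
    exact div_pos one_pos (hcard t i)
  -- windowProd facts
  have hWnn : ∀ t k i j, 0 ≤ windowProd A t k i j := by
    intro t k
    induction k with
    | zero =>
      intro i j
      rw [show windowProd A t 0 = 1 from rfl, Matrix.one_apply]
      split <;> norm_num
    | succ k ih =>
      intro i j
      rw [show windowProd A t (k+1) = A (t+k) * windowProd A t k from rfl,
        Matrix.mul_apply]
      exact Finset.sum_nonneg fun l _ => mul_nonneg (hAnn _ _ _) (ih l j)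
  have hWcol : ∀ t k j, ∑ i, windowProd A t k i j = 1 := by
    intro t k
    induction k with
    | zero =>
      intro j
      rw [show windowProd A t 0 = 1 from rfl]
      simp [Matrix.one_apply]
    | succ k ih =>
      intro j
      rw [show windowProd A t (k+1) = A (t+k) * windowProd A t k from rfl]
      simp only [Matrix.mul_apply]
      rw [Finset.sum_comm]
      have h1 : ∀ l, ∑ i, A (t+k) i l * windowProd A t k l j
          = (∑ i, A (t+k) i l) * windowProd A t k l j := by
        intro l; rw [Finset.sum_mul]
      calc ∑ l, ∑ i, A (t+k) i l * windowProd A t k l j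
          = ∑ l, (∑ i, A (t+k) i l) * windowProd A t k l j :=
            Finset.sum_congr rfl fun l _ => h1 l
        _ = ∑ l, windowProd A t k l j := by
            refine Finset.sum_congr rfl fun l _ => ?_
            rw [hAcol (t+k) l, one_mul]
        _ = 1 := ih j
  have hWlb : ∀ t k i j, 0 < windowProd A t k i j →
      (1/(n:ℝ))^k ≤ windowProd A t k i j := by
    intro t k
    induction k with
    | zero =>
      intro i j h
      rw [show windowProd A t 0 = 1 from rfl] at h ⊢
      by_cases hij : i = j
      · simp [Matrix.one_apply, hij]
      · rw [Matrix.one_apply_ne hij] at h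
        norm_num at h
    | succ k ih =>
      intro i j h
      rw [show windowProd A t (k+1) = A (t+k) * windowProd A t k from rfl,
        Matrix.mul_apply] at h ⊢
      have hterm : ∀ l, 0 ≤ A (t+k) i l * windowProd A t k l j :=
        fun l => mul_nonneg (hAnn _ _ _) (hWnn t k l j)
      obtain ⟨l, hl⟩ : ∃ l, 0 < A (t+k) i l * windowProd A t k l j := by
        by_contra hco
        push_neg at hco
        have hz' : ∑ l, A (t+k) i l * windowProd A t k l j = 0 :=
          le_antisymm (Finset.sum_nonpos fun l _ => hco l)
            (Finset.sum_nonneg fun l _ => hterm l)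
        rw [hz'] at h
        exact lt_irrefl 0 h
      have ha : 0 < A (t+k) i l := by
        rcases mul_pos_iff.mp hl with ⟨h1, _⟩ | ⟨_, h2⟩
        · exact h1
        · exact absurd h2 (not_lt.2 (hWnn t k l j))
      have hb : 0 < windowProd A t k l j := by
        rcases mul_pos_iff.mp hl with ⟨_, h1⟩ | ⟨h2, _⟩
        · exact h1
        · exact absurd h2 (not_lt.2 (hAnn (t+k) i l))
      calc (1/(n:ℝ))^(k+1) = (1/n) * (1/n)^k := by ring
        _ ≤ A (t+k) i l * windowProd A t k l j :=
            mul_le_mul (hAlb (t+k) i l ha) (ih l j hb) (by positivity) (hAnn _ _ _)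
        _ ≤ ∑ l', A (t+k) i l' * windowProd A t k l' j :=
            Finset.single_le_sum (fun l' _ => hterm l') (Finset.mem_univ l)
  -- recursion
  have hrec : ∀ (u : ℕ → Fin n → ℝ), (∀ t, u (t+1) = (A t).mulVec (u t)) →
      ∀ t k, u (t + k) = (windowProd A t k).mulVec (u t) := by
    intro u hu t k
    induction k with
    | zero =>
      rw [show windowProd A t 0 = 1 from rfl, Matrix.one_mulVec]
      rfl
    | succ k ih =>
      rw [show t + (k+1) = (t+k) + 1 from rfl, hu (t+k), ih,
        show windowProd A t (k+1) = A (t+k) * windowProd A t k from rfl,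
        Matrix.mulVec_mulVec]
  have hsum : ∀ (u : ℕ → Fin n → ℝ), (∀ t, u (t+1) = (A t).mulVec (u t)) →
      ∀ t, ∑ i, u t i = ∑ i, u 0 i := by
    intro u hu t
    induction t with
    | zero => rfl
    | succ t ih =>
      rw [hu t]
      have h1 : ∑ i, (A t).mulVec (u t) i = ∑ i, ∑ j, A t i j * u t j := rfl
      rw [h1, Finset.sum_comm]
      calc ∑ j, ∑ i, A t i j * u t j
          = ∑ j, (∑ i, A t i j) * u t j := by
            exact Finset.sum_congr rfl fun j _ => (Finset.sum_mul _ _ _).symm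
        _ = ∑ j, u t j := by
            refine Finset.sum_congr rfl fun j _ => ?_
            rw [hAcol t j, one_mul]
        _ = ∑ i, u 0 i := ih
  have hzpos : ∀ t i, 0 < z t i := by
    intro t
    induction t with
    | zero => intro i; rw [hz0]; exact hw i
    | succ t ih =>
      intro i
      rw [hz t]
      have h1 : (A t).mulVec (z t) i = ∑ j, A t i j * z t j := rfl
      rw [h1]
      exact Finset.sum_pos' (fun j _ => mul_nonneg (hAnn t i j) (le_of_lt (ih j)))
        ⟨i, Finset.mem_univ i, mul_pos (hAdiag t i) (ih i)⟩
  have hzS : ∀ t, ∑ i, z t i = S := by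
    intro t
    rw [hsum z hz t, hz0]
  have hyV : ∀ t, ∑ i, y t i = V := by
    intro t
    rw [hsum y hy t, hy0]
  have hzle : ∀ t i, z t i ≤ S := by
    intro t i
    have h1 := Finset.single_le_sum (fun j _ => le_of_lt (hzpos t j))
      (Finset.mem_univ i)
    rwa [hzS t] at h1
  set c : ℝ := (1/(n:ℝ))^D with hcdef
  have hc0 : 0 < c := pow_pos (div_pos one_pos hnpos) D
  have hc1 : c ≤ 1 := by
    apply pow_le_one₀
    · positivity
    · rw [div_le_one hnpos]
      exact_mod_cast hn
  have hzlb : ∀ t i, c * S ≤ z (t + D) i := by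
    intro t i
    rw [hrec z hz t D]
    have h1 : (windowProd A t D).mulVec (z t) i = ∑ j, windowProd A t D i j * z t j := rfl
    rw [h1]
    calc c * S = ∑ j, c * z t j := by rw [← Finset.mul_sum, hzS t]
      _ ≤ ∑ j, windowProd A t D i j * z t j :=
          Finset.sum_le_sum fun j _ =>
            mul_le_mul_of_nonneg_right (hWlb t D i j (hdiam t i j))
              (le_of_lt (hzpos t j))
  -- the ratios and their extrema
  set x : ℕ → Fin n → ℝ := fun t i => y t i / z t i with hxdef
  set m : ℕ → ℝ := fun t => Finset.univ.inf' hune (x t) with hmdef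
  set M : ℕ → ℝ := fun t => Finset.univ.sup' hune (x t) with hMdef
  have hxM : ∀ t i, x t i ≤ M t := fun t i => Finset.le_sup' (x t) (Finset.mem_univ i)
  have hmx : ∀ t i, m t ≤ x t i := fun t i => Finset.inf'_le (x t) (Finset.mem_univ i)
  have hmM : ∀ t, m t ≤ M t := fun t =>
    le_trans (hmx t ⟨0, hn⟩) (hxM t ⟨0, hn⟩)
  have hylb : ∀ t j, m t * z t j ≤ y t j := by
    intro t j
    have h1 : m t ≤ y t j / z t j := hmx t j
    exact (le_div_iff₀ (hzpos t j)).1 h1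
  have hyub : ∀ t j, y t j ≤ M t * z t j := by
    intro t j
    have h1 : y t j / z t j ≤ M t := hxM t j
    exact (div_le_iff₀ (hzpos t j)).1 h1
  have hstepM : ∀ t i, x (t+1) i ≤ M t := by
    intro t i
    have h2 : z (t+1) i = ∑ j, A t i j * z t j := by rw [hz t]; rfl
    have h3 : y (t+1) i ≤ M t * z (t+1) i := by
      have h1 : y (t+1) i = ∑ j, A t i j * y t j := by rw [hy t]; rfl
      rw [h1, h2, Finset.mul_sum]
      refine Finset.sum_le_sum fun j _ => ?_
      calc A t i j * y t j ≤ A t i j * (M t * z t j) :=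
            mul_le_mul_of_nonneg_left (hyub t j) (hAnn t i j)
        _ = M t * (A t i j * z t j) := by ring
    exact (div_le_iff₀ (hzpos (t+1) i)).2 h3
  have hstepm : ∀ t i, m t ≤ x (t+1) i := by
    intro t i
    have h2 : z (t+1) i = ∑ j, A t i j * z t j := by rw [hz t]; rfl
    have h3 : m t * z (t+1) i ≤ y (t+1) i := by
      have h1 : y (t+1) i = ∑ j, A t i j * y t j := by rw [hy t]; rfl
      rw [h1, h2, Finset.mul_sum]
      refine Finset.sum_le_sum fun j _ => ?_
      calc m t * (A t i j * z t j) = A t i j * (m t * z t j) := by ring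
        _ ≤ A t i j * y t j :=
            mul_le_mul_of_nonneg_left (hylb t j) (hAnn t i j)
    exact (le_div_iff₀ (hzpos (t+1) i)).2 h3
  have hMk : ∀ t k, M (t + k) ≤ M t := by
    intro t k
    induction k with
    | zero => exact le_rfl
    | succ k ih =>
      refine le_trans ?_ ih
      exact Finset.sup'_le _ _ fun i _ => hstepM (t+k) i
  have hmk : ∀ t k, m t ≤ m (t + k) := by
    intro t k
    induction k with
    | zero => exact le_rfl
    | succ k ih =>
      refine le_trans ih ?_
      exact Finset.le_inf' _ _ fun i _ => hstepm (t+k) i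
  set osc : ℕ → ℝ := fun t => M t - m t with hoscdef
  have hosc_nonneg : ∀ t, 0 ≤ osc t := fun t => sub_nonneg.2 (hmM t)
  have hoscmono : ∀ s t, s ≤ t → osc t ≤ osc s := by
    intro s t hst
    obtain ⟨k, rfl⟩ := Nat.exists_eq_add_of_le hst
    have h1 := hMk s k
    have h2 := hmk s k
    show M (s+k) - m (s+k) ≤ M s - m s
    linarith
  set r : ℝ := V / S with hrdef
  have hrM : ∀ t, r ≤ M t := by
    intro t
    rw [hrdef, div_le_iff₀ hS0]
    calc V = ∑ i, y t i := (hyV t).symm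
      _ ≤ ∑ i, M t * z t i := Finset.sum_le_sum fun i _ => hyub t i
      _ = M t * S := by rw [← Finset.mul_sum, hzS t]
  have hmr : ∀ t, m t ≤ r := by
    intro t
    rw [hrdef, le_div_iff₀ hS0]
    calc m t * S = ∑ i, m t * z t i := by rw [← Finset.mul_sum, hzS t]
      _ ≤ ∑ i, y t i := Finset.sum_le_sum fun i _ => hylb t i
      _ = V := hyV t
  set q : ℝ := 1 - c^2 with hqdef
  have hq0 : 0 ≤ q := by
    have h1 : c^2 ≤ 1 := pow_le_one₀ (le_of_lt hc0) hc1
    rw [hqdef]; linarith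
  have hq1 : q < 1 := by
    have h1 : 0 < c^2 := pow_pos hc0 2
    rw [hqdef]; linarith
  -- contraction
  have hcontr : ∀ t, osc (t + D + D) ≤ q * osc (t + D) := by
    intro t
    set u : ℕ := t + D with hudef
    obtain ⟨j₀, _, hj₀⟩ := Finset.exists_mem_eq_sup' hune (x u)
    have hΔ : 0 ≤ M u - m u := sub_nonneg.2 (hmM u)
    have key : ∀ i, m u + c^2 * (M u - m u) ≤ x (u + D) i := by
      intro i
      have hyW : y (u+D) i = ∑ j, windowProd A u D i j * y u j := by
        rw [hrec y hy u D]; rfl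
      have hzW : z (u+D) i = ∑ j, windowProd A u D i j * z u j := by
        rw [hrec z hz u D]; rfl
      have hterm : ∀ j, 0 ≤ windowProd A u D i j * (y u j - m u * z u j) :=
        fun j => mul_nonneg (hWnn u D i j) (by linarith [hylb u j])
      have hyj₀ : y u j₀ = M u * z u j₀ := by
        have h1 : x u j₀ = M u := hj₀.symm
        have h2 : x u j₀ * z u j₀ = y u j₀ := by
          show y u j₀ / z u j₀ * z u j₀ = y u j₀
          exact div_mul_cancel₀ (y u j₀) (ne_of_gt (hzpos u j₀))
        rw [← h2, h1]
      have h1 : c * (c * S * (M u - m u)) ≤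
          ∑ j, windowProd A u D i j * (y u j - m u * z u j) := by
        have hj : c * (c * S * (M u - m u)) ≤
            windowProd A u D i j₀ * (y u j₀ - m u * z u j₀) := by
          rw [hyj₀]
          have e1 : M u * z u j₀ - m u * z u j₀ = z u j₀ * (M u - m u) := by ring
          rw [e1]
          have h2 : c * S * (M u - m u) ≤ z u j₀ * (M u - m u) :=
            mul_le_mul_of_nonneg_right (hzlb t j₀) hΔ
          exact mul_le_mul (hWlb u D i j₀ (hdiam u i j₀)) h2
            (by positivity) (hWnn u D i j₀)
        exact le_trans hj
          (Finset.single_le_sum (fun j _ => hterm j) (Finset.mem_univ j₀))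
      have h2 : ∑ j, windowProd A u D i j * (y u j - m u * z u j)
          = y (u+D) i - m u * z (u+D) i := by
        calc ∑ j, windowProd A u D i j * (y u j - m u * z u j)
            = ∑ j, (windowProd A u D i j * y u j
                - m u * (windowProd A u D i j * z u j)) :=
              Finset.sum_congr rfl fun j _ => by ring
          _ = (∑ j, windowProd A u D i j * y u j)
                - m u * ∑ j, windowProd A u D i j * z u j := by
              rw [Finset.sum_sub_distrib, Finset.mul_sum]
          _ = y (u+D) i - m u * z (u+D) i := by rw [hyW, hzW]
      have h3 : m u * z (u+D) i + c * (c * S * (M u - m u)) ≤ y (u+D) i := by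
        rw [h2] at h1; linarith
      have hgoal : (m u + c^2 * (M u - m u)) * z (u+D) i ≤ y (u+D) i := by
        have e1 : (m u + c^2 * (M u - m u)) * z (u+D) i
            = m u * z (u+D) i + (c^2 * (M u - m u)) * z (u+D) i := by ring
        have e2 : (c^2 * (M u - m u)) * z (u+D) i ≤ (c^2 * (M u - m u)) * S :=
          mul_le_mul_of_nonneg_left (hzle (u+D) i)
            (mul_nonneg (sq_nonneg c) hΔ)
        have e3 : (c^2 * (M u - m u)) * S = c * (c * S * (M u - m u)) := by ring
        rw [e1]; linarith
      exact (le_div_iff₀ (hzpos (u+D) i)).2 hgoal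
    have hm' : m u + c^2 * (M u - m u) ≤ m (u + D) :=
      Finset.le_inf' _ _ fun i _ => key i
    have hM' : M (u + D) ≤ M u := hMk u D
    show M (u+D) - m (u+D) ≤ q * (M u - m u)
    rw [hqdef]
    linarith
  -- geometric decay
  have hgeo : ∀ k, osc (k*D + D) ≤ q^k * osc D := by
    intro k
    induction k with
    | zero => simp
    | succ k ih =>
      have e : (k+1)*D + D = k*D + D + D := by ring
      rw [e]
      calc osc (k*D + D + D) ≤ q * osc (k*D + D) := hcontr (k*D)
        _ ≤ q * (q^k * osc D) := mul_le_mul_of_nonneg_left ih hq0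
        _ = q^(k+1) * osc D := by ring
  have hqpow : Filter.Tendsto (fun k => q^k * osc D) Filter.atTop (nhds 0) := by
    have h1 := tendsto_pow_atTop_nhds_zero_of_lt_one hq0 hq1
    simpa using h1.mul_const (osc D)
  have hosc0 : Filter.Tendsto osc Filter.atTop (nhds 0) := by
    rw [Metric.tendsto_atTop]
    intro ε hε
    obtain ⟨k, hk⟩ := (hqpow.eventually (gt_mem_nhds hε)).exists
    refine ⟨k*D + D, fun t ht => ?_⟩
    have h1 : osc t ≤ osc (k*D + D) := hoscmono _ _ ht
    have h2 := hgeo k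
    rw [Real.dist_eq, sub_zero, abs_of_nonneg (hosc_nonneg t)]
    linarith
  intro i
  have hlim : Filter.Tendsto (fun t => x t i - r) Filter.atTop (nhds 0) := by
    have hneg : Filter.Tendsto (fun t => -osc t) Filter.atTop (nhds 0) := by
      simpa using hosc0.neg
    refine tendsto_of_tendsto_of_tendsto_of_le_of_le hneg hosc0
      (fun t => ?_) (fun t => ?_)
    · have ho : osc t = M t - m t := rfl
      have := hxM t i; have := hmx t i; have := hmr t; have := hrM t
      simp only [ho]
      linarith
    · have ho : osc t = M t - m t := rfl
      have := hxM t i; have := hmx t i; have := hmr t; have := hrM t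
      simp only [ho]
      linarith
  have hfin := hlim.add_const r
  simp only [zero_add] at hfin
  have heq : (fun t => x t i - r + r) = fun t => y t i / z t i := by
    funext t
    simp [hxdef]
  rw [heq] at hfin
  exact hfin
end

section
/- The threshold frequency predicate Φ_r^ω is continuous in frequency (with respect to the discrete metric on {0,1}) if and only if r is irrational, for r ∈ (0,1). -/
/-!
If `r` is irrational, the limit frequency `ν* ω` is a rational number different from `r`, so the
frequencies along the sequence are eventually on the same side of `r` as `ν* ω`.

If `r = a / (n + 1)` is rational, take for `u` the vector made of `a` copies of `ω` followed by
copies of a second value `ω₂`, and for the `k`-th vector `a * k` copies of `ω` among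
`(n + 1) * k + 1` entries. Its frequency of `ω` is `a * k / ((n + 1) * k + 1)`, which tends to `r`
while staying strictly below it, so `Φ_r^ω` is `0` along the sequence and `1` at `u`.
-/

/-- The frequency of the value `ω` in the (nonempty) vector `v ∈ Ω^{n+1}`:
its multiplicity divided by the length. -/
def freqOf {Ω : Type} [DecidableEq Ω] {n : ℕ} (v : Fin (n + 1) → Ω) (ω : Ω) : ℚ :=
  ((Finset.univ.filter (fun i => v i = ω)).card : ℚ) / (n + 1)

open Filter Topology

def blockVec {Ω : Type} (ω ω₂ : Ω) (n a : ℕ) : Fin (n + 1) → Ω :=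
  fun i => if (i : ℕ) < a then ω else ω₂

section blockVec

variable {Ω : Type} [DecidableEq Ω] {ω ω₂ : Ω}

theorem freqOf_blockVec (hω : ω₂ ≠ ω) {n a : ℕ} (ha : a ≤ n + 1) (ω' : Ω) :
    freqOf (blockVec ω ω₂ n a) ω' =
      if ω' = ω then (a : ℚ) / (n + 1) else if ω' = ω₂ then 1 - (a : ℚ) / (n + 1) else 0 := by
  have hfirst : (Finset.univ.filter fun i : Fin (n + 1) => (i : ℕ) < a).card = a := by
    rw [Fin.card_filter_val_lt, min_eq_right ha]
  unfold freqOf blockVec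
  split_ifs with h₁ h₂
  · subst h₁
    simp [hω, hfirst]
  · subst h₂
    simp only [ite_eq_right_iff, hω.symm, imp_false, Finset.filter_not,
      Finset.card_sdiff_of_subset (Finset.filter_subset _ _), hfirst, Finset.card_univ,
      Fintype.card_fin, Nat.cast_sub ha]
    field_simp
    push_cast
    ring
  · simp [ite_eq_iff, Ne.symm h₁, Ne.symm h₂]

theorem tendsto_freqOf_blockVec (hω : ω₂ ≠ ω) {n a : ℕ → ℕ} (ha : ∀ k, a k ≤ n k + 1)
    {n₀ a₀ : ℕ} (ha₀ : a₀ ≤ n₀ + 1)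
    (h : Tendsto (fun k => ((a k : ℝ) / (n k + 1))) atTop (𝓝 ((a₀ : ℝ) / (n₀ + 1))))
    (ω' : Ω) :
    Tendsto (fun k => (freqOf (blockVec ω ω₂ (n k) (a k)) ω' : ℝ)) atTop
      (𝓝 (freqOf (blockVec ω ω₂ n₀ a₀) ω' : ℝ)) := by
  simp only [freqOf_blockVec hω (ha _), freqOf_blockVec hω ha₀]
  split_ifs
  · push_cast
    exact h
  · push_cast
    exact h.const_sub 1
  · exact tendsto_const_nhds

theorem freqOf_blockVec_self (hω : ω₂ ≠ ω) {n a : ℕ} (ha : a ≤ n + 1) :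
    (freqOf (blockVec ω ω₂ n a) ω : ℝ) = a / (n + 1) := by
  rw [freqOf_blockVec hω ha, if_pos rfl]
  push_cast
  rfl

theorem exists_tendsto_freqOf_blockVec_of_lt (hω : ω₂ ≠ ω) {n a : ℕ} (ha₀ : 0 < a)
    (ha : a ≤ n + 1) :
    ∃ V : ℕ → Σ m : ℕ, Fin (m + 1) → Ω,
      (∀ ω', Tendsto (fun k => (freqOf (V k).2 ω' : ℝ)) atTop
        (𝓝 (freqOf (blockVec ω ω₂ n a) ω' : ℝ))) ∧
      ∀ k, (freqOf (V k).2 ω : ℝ) < a / (n + 1) := by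
  have hlen : ∀ k, a * k ≤ (n + 1) * k + 1 := fun k => by nlinarith
  refine ⟨fun k => ⟨(n + 1) * k, blockVec ω ω₂ ((n + 1) * k) (a * k)⟩,
    tendsto_freqOf_blockVec hω hlen ha ?_, fun k => ?_⟩
  · have := tendsto_add_mul_div_add_mul_atTop_nhds 0 1 (a : ℝ) (d := n + 1) (by positivity)
    push_cast
    simpa [mul_comm, add_comm] using this
  · rw [freqOf_blockVec_self hω (hlen k), div_lt_div_iff₀ (by positivity) (by positivity)]
    push_cast
    nlinarith [(Nat.cast_pos.2 ha₀ : (0 : ℝ) < a)]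

end blockVec

theorem Rat.exists_eq_natCast_div_succ {q : ℚ} (hq : 0 ≤ q) : ∃ a n : ℕ, q = a / (n + 1) := by
  lift q to ℚ≥0 using hq
  obtain ⟨n, hn⟩ := Nat.exists_eq_add_one_of_ne_zero q.den_ne_zero
  refine ⟨q.num, n, ?_⟩
  conv_lhs => rw [← NNRat.num_div_den q, hn]
  push_cast
  rfl

theorem eventually_le_iff_of_tendsto {ι : Type*} {l : Filter ι} {f : ι → ℝ} {x r : ℝ}
    (hf : Tendsto f l (𝓝 x)) (hx : x ≠ r) : ∀ᶠ k in l, (r ≤ f k ↔ r ≤ x) := by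
  rcases hx.lt_or_gt with hlt | hgt
  · filter_upwards [hf.eventually_lt_const hlt] with k hk
    exact iff_of_false hk.not_ge hlt.not_ge
  · filter_upwards [hf.eventually_const_lt hgt] with k hk
    exact iff_of_true hk.le hgt.le

/-- The threshold frequency predicate `Φ_r^ω` (with `Φ_r^ω(v) = 1` iff the frequency of
`ω` in `v` is at least `r`) is continuous in frequency — with respect to the discrete
metric on `{0,1}`, i.e. for every sequence of vectors `V k` (of arbitrary lengths) whose
frequency functions converge pointwise to the frequency function of some vector `u`,
eventually `Φ_r^ω(V k) = Φ_r^ω(u)` — if and only if `r` is irrational, for `r ∈ (0,1)`.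
(Here `Ω` has at least two elements.) -/
theorem stmt19 {Ω : Type} [DecidableEq Ω] (ω ω₂ : Ω) (hω : ω₂ ≠ ω)
    (r : ℝ) (h0 : 0 < r) (h1 : r < 1) :
    (∀ (V : ℕ → Σ n : ℕ, Fin (n + 1) → Ω) (ν : Ω → ℚ)
        (m : ℕ) (u : Fin (m + 1) → Ω),
      (∀ ω', freqOf u ω' = ν ω') →
      (∀ ω', Filter.Tendsto (fun k => ((freqOf (V k).2 ω' : ℝ))) Filter.atTop
        (nhds ((ν ω' : ℝ)))) →
      ∀ᶠ k in Filter.atTop,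
        ((r ≤ (freqOf (V k).2 ω : ℝ)) ↔ (r ≤ (freqOf u ω : ℝ))))
    ↔ Irrational r := by
  constructor
  · rintro hcont ⟨q, rfl⟩
    obtain ⟨a, n, rfl⟩ := Rat.exists_eq_natCast_div_succ (q := q) (by exact_mod_cast h0.le)
    push_cast at h0 h1 hcont
    have ha : a ≤ n + 1 := by
      have := (div_lt_one (by positivity)).1 h1
      exact_mod_cast this.le
    have ha₀ : 0 < a := by
      have := (div_pos_iff_of_pos_right (by positivity)).1 h0
      exact_mod_cast this
    obtain ⟨V, hV, hlt⟩ := exists_tendsto_freqOf_blockVec_of_lt hω ha₀ ha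
    obtain ⟨k, hk⟩ := (hcont V _ n (blockVec ω ω₂ n a) (fun _ => rfl) hV).exists
    exact (hlt k).not_ge (hk.2 (freqOf_blockVec_self hω ha).ge)
  · intro hirr V ν m u hu hT
    rw [hu ω]
    exact eventually_le_iff_of_tendsto (hT ω) fun h => hirr ⟨ν ω, h⟩
end
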